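/- Let G be an abelian group and let R be a G-graded ring that is gr-prime and right gr-Goldie. Let I be a graded right ideal of R that is essential (I has nonzero intersection with every nonzero right ideal of R). Then there exist finitely many non-nilpotent homogeneous elements a_1, ..., a_n ∈ I such that each right ideal a_iR is gr-uniform, the sum a_1R + ... + a_nR is direct, and the intersection r-ann(a_1) ∩ ... ∩ r-ann(a_n) is zero. -/

import Mathlib

/-- The right annihilator of an element, as an additive subgroup. -/
def rAnn {R : Type*} [Ring R] (a : R) : AddSubgroup R where
  carrier := {r : R | a * r = 0}
  zero_mem' := mul_zero a
  add_mem' := by intro x y hx hy; simp only [Set.mem_setOf_eq, mul_add] at *; rw [hx, hy, add_zero]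
  neg_mem' := by intro x hx; simp only [Set.mem_setOf_eq, mul_neg] at *; rw [hx, neg_zero]

/-- The right ideal `aR` generated by `a` (in a unital ring), as an additive subgroup. -/
def mulLeftRange {R : Type*} [Ring R] (a : R) : AddSubgroup R where
  carrier := Set.range (fun r : R => a * r)
  zero_mem' := ⟨0, mul_zero a⟩
  add_mem' := by rintro x y ⟨r, rfl⟩ ⟨s, rfl⟩; exact ⟨r + s, by simp [mul_add]⟩
  neg_mem' := by rintro x ⟨r, rfl⟩; exact ⟨-r, by simp [mul_neg]⟩

/-- A graded right ideal: an additive subgroup closed under right multiplication that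
contains all homogeneous components of its elements. -/
def IsGradedRightIdeal {G R : Type*} [AddCommGroup G] [DecidableEq G] [Ring R]
    (𝒜 : G → AddSubgroup R) [GradedRing 𝒜] (I : AddSubgroup R) : Prop :=
  (∀ a ∈ I, ∀ r : R, a * r ∈ I) ∧
  (∀ a ∈ I, ∀ g : G, (DirectSum.decompose 𝒜 a g : R) ∈ I)

/-- `R` is gr-prime: for homogeneous `a, b`, `aRb = 0` implies `a = 0` or `b = 0`. -/
def GrPrime {G R : Type*} [AddCommGroup G] [DecidableEq G] [Ring R]
    (𝒜 : G → AddSubgroup R) [GradedRing 𝒜] : Prop :=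
  ∀ a b : R, SetLike.IsHomogeneousElem 𝒜 a → SetLike.IsHomogeneousElem 𝒜 b →
    (∀ r : R, a * r * b = 0) → a = 0 ∨ b = 0

/-- `R` is right gr-Goldie: ACC on right annihilators of homogeneous elements, and no
infinite direct sum of nonzero graded right ideals. -/
def GrGoldie {G R : Type*} [AddCommGroup G] [DecidableEq G] [Ring R]
    (𝒜 : G → AddSubgroup R) [GradedRing 𝒜] : Prop :=
  (∀ f : ℕ → R, (∀ n, SetLike.IsHomogeneousElem 𝒜 (f n)) →
      ¬ StrictMono fun n => rAnn (f n)) ∧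
  ¬ ∃ I : ℕ → AddSubgroup R, (∀ n, IsGradedRightIdeal 𝒜 (I n)) ∧
      (∀ n, I n ≠ ⊥) ∧ iSupIndep I

/-- A graded right ideal `I` is gr-essential if it meets every nonzero graded right
ideal nontrivially. -/
def GrEssential {G R : Type*} [AddCommGroup G] [DecidableEq G] [Ring R]
    (𝒜 : G → AddSubgroup R) [GradedRing 𝒜] (I : AddSubgroup R) : Prop :=
  IsGradedRightIdeal 𝒜 I ∧
  ∀ K : AddSubgroup R, IsGradedRightIdeal 𝒜 K → K ≠ ⊥ → I ⊓ K ≠ ⊥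

/-- A graded right ideal `M` is gr-uniform if it is nonzero and any two nonzero graded
right ideals contained in `M` intersect nontrivially. -/
def GrUniform {G R : Type*} [AddCommGroup G] [DecidableEq G] [Ring R]
    (𝒜 : G → AddSubgroup R) [GradedRing 𝒜] (M : AddSubgroup R) : Prop :=
  M ≠ ⊥ ∧
  ∀ K L : AddSubgroup R, IsGradedRightIdeal 𝒜 K → IsGradedRightIdeal 𝒜 L →
    K ≤ M → L ≤ M → K ≠ ⊥ → L ≠ ⊥ → K ⊓ L ≠ ⊥


lemma mem_rAnn' {R : Type*} [Ring R] {a x : R} : x ∈ rAnn a ↔ a * x = 0 := Iff.rfl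
lemma mem_mulLeftRange' {R : Type*} [Ring R] {a x : R} : x ∈ mulLeftRange a ↔ ∃ r, a * r = x := Iff.rfl

section Indep
variable {M : Type*} [AddCommGroup M] {ι : Type*} [LinearOrder ι]

lemma mem_iSup_addsub (A : ι → AddSubgroup M) {x : M}
    (hx : x ∈ ⨆ i, A i) : ∃ f : ι →₀ M, (∀ i, f i ∈ A i) ∧ (f.sum fun _ m => m) = x := by
  have h2 : x ∈ ⨆ i, AddSubgroup.toIntSubmodule (A i) := by
    rw [← OrderIso.map_iSup]; exact hx
  exact (Submodule.mem_iSup_iff_exists_finsupp _ x).1 h2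

lemma finsum_above (A : ι → AddSubgroup M)
    (h : ∀ j, ∀ x ∈ A j, x ∈ (⨆ i, ⨆ _ : j < i, A i) → x = 0) :
    ∀ s : Finset ι, ∀ g : ι → M, (∀ i ∈ s, g i ∈ A i) → ∑ i ∈ s, g i = 0 → ∀ i ∈ s, g i = 0 := by
  intro s
  induction s using Finset.strongInduction with
  | _ s ih =>
    intro g hg hsum i hi
    rcases s.eq_empty_or_nonempty with rfl | hs
    · simp at hi
    set j := s.min' hs with hjdef
    have hj : j ∈ s := s.min'_mem hs
    have hsum' : g j + ∑ k ∈ s.erase j, g k = 0 := by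
      rw [Finset.add_sum_erase s g hj]; exact hsum
    have hmem : ∑ k ∈ s.erase j, g k ∈ (⨆ i, ⨆ _ : j < i, A i) := by
      apply AddSubgroup.sum_mem
      intro k hk
      have hlt : j < k := lt_of_le_of_ne (s.min'_le k (Finset.mem_of_mem_erase hk))
        (Ne.symm (Finset.ne_of_mem_erase hk))
      exact (le_iSup₂ (f := fun i (_ : j < i) => A i) k hlt) (hg k (Finset.mem_of_mem_erase hk))
    have hgj : g j = 0 := by
      apply h j _ (hg j hj)
      have : g j = -∑ k ∈ s.erase j, g k := eq_neg_of_add_eq_zero_left hsum'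
      rw [this]; exact neg_mem hmem
    have hrest : ∑ k ∈ s.erase j, g k = 0 := by rw [hgj, zero_add] at hsum'; exact hsum'
    rcases eq_or_ne i j with rfl | hij
    · exact hgj
    · exact ih (s.erase j) (Finset.erase_ssubset hj) g
        (fun k hk => hg k (Finset.mem_of_mem_erase hk)) hrest i (Finset.mem_erase.2 ⟨hij, hi⟩)

lemma finsum_below (A : ι → AddSubgroup M)
    (h : ∀ j, ∀ x ∈ A j, x ∈ (⨆ i, ⨆ _ : i < j, A i) → x = 0) :
    ∀ s : Finset ι, ∀ g : ι → M, (∀ i ∈ s, g i ∈ A i) → ∑ i ∈ s, g i = 0 → ∀ i ∈ s, g i = 0 := by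
  intro s
  induction s using Finset.strongInduction with
  | _ s ih =>
    intro g hg hsum i hi
    rcases s.eq_empty_or_nonempty with rfl | hs
    · simp at hi
    set j := s.max' hs with hjdef
    have hj : j ∈ s := s.max'_mem hs
    have hsum' : g j + ∑ k ∈ s.erase j, g k = 0 := by
      rw [Finset.add_sum_erase s g hj]; exact hsum
    have hmem : ∑ k ∈ s.erase j, g k ∈ (⨆ i, ⨆ _ : i < j, A i) := by
      apply AddSubgroup.sum_mem
      intro k hk
      have hlt : k < j := lt_of_le_of_ne (s.le_max' k (Finset.mem_of_mem_erase hk))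
        (Finset.ne_of_mem_erase hk)
      exact (le_iSup₂ (f := fun i (_ : i < j) => A i) k hlt) (hg k (Finset.mem_of_mem_erase hk))
    have hgj : g j = 0 := by
      apply h j _ (hg j hj)
      have : g j = -∑ k ∈ s.erase j, g k := eq_neg_of_add_eq_zero_left hsum'
      rw [this]; exact neg_mem hmem
    have hrest : ∑ k ∈ s.erase j, g k = 0 := by rw [hgj, zero_add] at hsum'; exact hsum'
    rcases eq_or_ne i j with rfl | hij
    · exact hgj
    · exact ih (s.erase j) (Finset.erase_ssubset hj) g
        (fun k hk => hg k (Finset.mem_of_mem_erase hk)) hrest i (Finset.mem_erase.2 ⟨hij, hi⟩)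

private lemma indep_of_finsum (A : ι → AddSubgroup M)
    (H : ∀ s : Finset ι, ∀ g : ι → M, (∀ i ∈ s, g i ∈ A i) → ∑ i ∈ s, g i = 0 → ∀ i ∈ s, g i = 0) :
    iSupIndep A := by
  classical
  rw [iSupIndep_def]
  intro j
  rw [AddSubgroup.disjoint_def]
  intro x hxj hx
  obtain ⟨f, hf, hfsum⟩ := mem_iSup_addsub (fun i => ⨆ _ : i ≠ j, A i) hx
  have hfj : f j = 0 := by
    have := hf j
    rw [iSup_neg (by simp)] at this
    simpa using this
  have hjns : j ∉ f.support := by simp [Finsupp.notMem_support_iff, hfj]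
  set g : ι → M := fun i => if i = j then -x else f i with hgdef
  have hsum : ∑ i ∈ insert j f.support, g i = 0 := by
    rw [Finset.sum_insert hjns]
    have : ∑ i ∈ f.support, g i = ∑ i ∈ f.support, f i := by
      apply Finset.sum_congr rfl
      intro i hi
      have : i ≠ j := fun hij => hjns (hij ▸ hi)
      simp [hgdef, this]
    rw [this]
    have : ∑ i ∈ f.support, f i = x := hfsum
    rw [this]; simp [hgdef]
  have hmem : ∀ i ∈ insert j f.support, g i ∈ A i := by
    intro i hi
    rcases eq_or_ne i j with rfl | hij
    · simp only [hgdef, if_pos rfl]; exact neg_mem hxj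
    · simp only [hgdef, if_neg hij]
      have := hf i
      rwa [iSup_pos hij] at this
  have := H (insert j f.support) g hmem hsum j (Finset.mem_insert_self _ _)
  simp only [hgdef, if_pos rfl, neg_eq_zero] at this
  exact this

lemma indep_above (A : ι → AddSubgroup M)
    (h : ∀ j, ∀ x ∈ A j, x ∈ (⨆ i, ⨆ _ : j < i, A i) → x = 0) : iSupIndep A :=
  indep_of_finsum A (finsum_above A h)

lemma indep_below (A : ι → AddSubgroup M)
    (h : ∀ j, ∀ x ∈ A j, x ∈ (⨆ i, ⨆ _ : i < j, A i) → x = 0) : iSupIndep A :=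
  indep_of_finsum A (finsum_below A h)

end Indep

section Graded
variable {G R : Type*} [AddCommGroup G] [DecidableEq G] [Ring R]
variable (𝒜 : G → AddSubgroup R) [GradedRing 𝒜]

lemma ne_bot_of_mem {H : AddSubgroup R} {x : R} (hx : x ∈ H) (h0 : x ≠ 0) : H ≠ ⊥ :=
  fun hbot => h0 (by rw [hbot] at hx; exact AddSubgroup.mem_bot.1 hx)

lemma rAnn_graded {a : R} (ha : SetLike.IsHomogeneousElem 𝒜 a) : IsGradedRightIdeal 𝒜 (rAnn a) := by
  obtain ⟨h, hah⟩ := ha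
  constructor
  · intro x hx r
    show a * (x * r) = 0
    rw [← mul_assoc, show a * x = 0 from hx, zero_mul]
  · intro x hx g
    show a * (DirectSum.decompose 𝒜 x g : R) = 0
    rw [← DirectSum.coe_decompose_mul_add_of_left_mem 𝒜 hah (j := g),
      show a * x = 0 from hx]
    simp

lemma mulLeftRange_graded {a : R} (ha : SetLike.IsHomogeneousElem 𝒜 a) :
    IsGradedRightIdeal 𝒜 (mulLeftRange a) := by
  obtain ⟨h, hah⟩ := ha
  constructor
  · rintro x ⟨r, rfl⟩ s; exact ⟨r * s, (mul_assoc _ _ _).symm⟩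
  · rintro x ⟨r, rfl⟩ g
    refine ⟨(DirectSum.decompose 𝒜 r (-h + g) : R), ?_⟩
    have e : h + (-h + g) = g := by abel
    show a * (DirectSum.decompose 𝒜 r (-h + g) : R) = (DirectSum.decompose 𝒜 (a * r) g : R)
    rw [← DirectSum.coe_decompose_mul_add_of_left_mem 𝒜 hah (j := -h + g), e]

lemma exists_homog_ne_zero {K : AddSubgroup R} (hK : IsGradedRightIdeal 𝒜 K) (hne : K ≠ ⊥) :
    ∃ c, c ∈ K ∧ SetLike.IsHomogeneousElem 𝒜 c ∧ c ≠ 0 := by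
  classical
  have hex : ∃ x ∈ K, x ≠ 0 := by
    by_contra hall
    push_neg at hall
    exact hne ((AddSubgroup.eq_bot_iff_forall K).2 hall)
  obtain ⟨x, hxK, hx0⟩ := hex
  have hg : ∃ g, (DirectSum.decompose 𝒜 x g : R) ≠ 0 := by
    by_contra hall
    push_neg at hall
    apply hx0
    calc x = ∑ g ∈ (DirectSum.decompose 𝒜 x).support, (DirectSum.decompose 𝒜 x g : R) :=
        (DirectSum.sum_support_decompose 𝒜 x).symm
      _ = 0 := Finset.sum_eq_zero fun g _ => hall g
  obtain ⟨g, hg⟩ := hg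
  exact ⟨_, hK.2 x hxK g, SetLike.isHomogeneousElem_coe _, hg⟩

lemma prime_elt (hprime : GrPrime 𝒜) {a b : R} (ha : SetLike.IsHomogeneousElem 𝒜 a)
    (hb : SetLike.IsHomogeneousElem 𝒜 b)
    (h : ∀ r, SetLike.IsHomogeneousElem 𝒜 r → a * r * b = 0) : a = 0 ∨ b = 0 := by
  apply hprime a b ha hb
  intro r
  classical
  conv_lhs => rw [← DirectSum.sum_support_decompose 𝒜 r]
  rw [Finset.mul_sum, Finset.sum_mul]
  exact Finset.sum_eq_zero fun g _ => h _ (SetLike.isHomogeneousElem_coe _)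

lemma exists_maximal_rAnn
    (hacc : ∀ f : ℕ → R, (∀ n, SetLike.IsHomogeneousElem 𝒜 (f n)) → ¬ StrictMono fun n => rAnn (f n))
    (S : Set R) (hne : S.Nonempty) (hhom : ∀ x ∈ S, SetLike.IsHomogeneousElem 𝒜 x) :
    ∃ a ∈ S, ∀ b ∈ S, ¬ rAnn a < rAnn b := by
  by_contra hc
  push_neg at hc
  choose! F hFS hFlt using hc
  obtain ⟨x0, hx0⟩ := hne
  let f : ℕ → R := fun n => F^[n] x0
  have hfS : ∀ n, f n ∈ S := by
    intro n
    induction n with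
    | zero => exact hx0
    | succ n ih =>
      show F^[n+1] x0 ∈ S
      rw [Function.iterate_succ_apply']
      exact hFS _ ih
  apply hacc f (fun n => hhom _ (hfS n))
  apply strictMono_nat_of_lt_succ
  intro n
  have : f (n+1) = F (f n) := Function.iterate_succ_apply' F n x0
  rw [this]
  exact hFlt _ (hfS n)

private lemma mul_pow_aux (t c : R) : ∀ k : ℕ, (t * c) ^ (k+1) = t * (c*t)^k * c := by
  intro k
  induction k with
  | zero => simp
  | succ k ih =>
    rw [pow_succ, ih, pow_succ]
    simp [mul_assoc]

lemma homog_pow {a : R} (ha : SetLike.IsHomogeneousElem 𝒜 a) (n : ℕ) :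
    SetLike.IsHomogeneousElem 𝒜 (a ^ n) := by
  obtain ⟨g, hg⟩ := ha
  exact ⟨n • g, SetLike.pow_mem_graded n hg⟩

lemma exists_nonnilpotent (hprime : GrPrime 𝒜)
    (hacc : ∀ f : ℕ → R, (∀ n, SetLike.IsHomogeneousElem 𝒜 (f n)) → ¬ StrictMono fun n => rAnn (f n))
    {K : AddSubgroup R} (hK : IsGradedRightIdeal 𝒜 K) (hne : K ≠ ⊥) :
    ∃ x, x ∈ K ∧ SetLike.IsHomogeneousElem 𝒜 x ∧ ∀ k : ℕ, x ^ (k+1) ≠ 0 := by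
  classical
  obtain ⟨c, hcK, hchom, hc0⟩ := exists_homog_ne_zero 𝒜 hK hne
  by_contra hall
  push_neg at hall
  -- every homogeneous left multiple of c is nilpotent
  have hnil : ∀ t, SetLike.IsHomogeneousElem 𝒜 t → ∃ k, (t * c) ^ (k+1) = 0 := by
    intro t ht
    obtain ⟨k, hk⟩ := hall (c * t) (hK.1 c hcK t) (SetLike.IsHomogeneousElem.mul hchom ht)
    refine ⟨k + 1, ?_⟩
    rw [mul_pow_aux, hk, mul_zero, zero_mul]
  set S : Set R := {x | x ≠ 0 ∧ ∃ t, SetLike.IsHomogeneousElem 𝒜 t ∧ x = t * c} with hSdef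
  have hcS : c ∈ S := ⟨hc0, 1, SetLike.isHomogeneousElem_one 𝒜, (one_mul c).symm⟩
  have hShom : ∀ x ∈ S, SetLike.IsHomogeneousElem 𝒜 x := by
    rintro x ⟨-, t, ht, rfl⟩
    exact SetLike.IsHomogeneousElem.mul ht hchom
  obtain ⟨a, haS, hamax⟩ := exists_maximal_rAnn 𝒜 hacc S ⟨c, hcS⟩ hShom
  obtain ⟨ha0, t₀, ht₀, hat⟩ := haS
  have hahom : SetLike.IsHomogeneousElem 𝒜 a := hat ▸ SetLike.IsHomogeneousElem.mul ht₀ hchom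
  have hmaxeq : ∀ x ∈ S, rAnn a ≤ rAnn x → rAnn x = rAnn a := by
    intro x hxS hle
    by_contra hne'
    exact hamax x hxS (hle.lt_of_ne (Ne.symm hne'))
  have key : ∀ r, SetLike.IsHomogeneousElem 𝒜 r → a * r * a = 0 := by
    intro r hr
    by_cases hra : r * a = 0
    · rw [mul_assoc, hra, mul_zero]
    · have hraS : r * a ∈ S :=
        ⟨hra, r * t₀, SetLike.IsHomogeneousElem.mul hr ht₀, by rw [hat, mul_assoc]⟩
      have hle : rAnn a ≤ rAnn (r * a) := by
        intro x hx
        show r * a * x = 0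
        rw [mul_assoc, show a * x = 0 from hx, mul_zero]
      -- (r * a) is nilpotent
      have hnilra : ∃ k, (r * a) ^ (k+1) = 0 := by
        obtain ⟨k, hk⟩ := hnil (r * t₀) (SetLike.IsHomogeneousElem.mul hr ht₀)
        exact ⟨k, by rw [show r * a = r * t₀ * c by rw [hat, mul_assoc], hk]⟩
      have hex : ∃ k, (r * a) ^ (k+1) = 0 := hnilra
      classical
      have hk₀ : (r * a) ^ (Nat.find hex + 1) = 0 := Nat.find_spec hex
      have hk₀pos : Nat.find hex ≠ 0 := by
        intro h0
        rw [h0, pow_one] at hk₀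
        exact hra hk₀
      obtain ⟨m, hm⟩ : ∃ m, Nat.find hex = m + 1 :=
        ⟨Nat.find hex - 1, (Nat.succ_pred_eq_of_pos (Nat.pos_of_ne_zero hk₀pos)).symm⟩
      rw [hm] at hk₀
      have hbne : (r * a) ^ (m + 1) ≠ 0 := Nat.find_min hex (by omega)
      set b := (r * a) ^ (m + 1) with hbdef
      have hb_eq : b = (r * a) ^ m * r * a := by
        rw [hbdef, pow_succ, ← mul_assoc]
      have hbS : b ∈ S := by
        refine ⟨hbne, (r * a) ^ m * r * t₀, ?_, ?_⟩
        · exact SetLike.IsHomogeneousElem.mul (SetLike.IsHomogeneousElem.mul (homog_pow 𝒜 (SetLike.IsHomogeneousElem.mul hr hahom) m) hr) ht₀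
        · rw [hb_eq, hat, mul_assoc, mul_assoc, mul_assoc]
      have hleb : rAnn a ≤ rAnn b := by
        intro x hx
        show b * x = 0
        rw [hb_eq, mul_assoc, show a * x = 0 from hx, mul_zero]
      have heqb : rAnn b = rAnn a := hmaxeq b hbS hleb
      have hrab : r * a ∈ rAnn b := by
        show b * (r * a) = 0
        rw [hbdef, ← pow_succ]
        exact hk₀
      rw [heqb] at hrab
      rw [mul_assoc]
      exact hrab
  rcases prime_elt 𝒜 hprime hahom hahom key with h | h <;> exact ha0 h

lemma rAnn_pow_le {x : R} (m j : ℕ) : rAnn (x ^ m) ≤ rAnn (x ^ (m + j)) := by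
  intro y hy
  show x ^ (m + j) * y = 0
  rw [add_comm, pow_add, mul_assoc, show x ^ m * y = 0 from hy, mul_zero]

lemma exists_uniform_elt_aux (hprime : GrPrime 𝒜)
    (hacc : ∀ f : ℕ → R, (∀ n, SetLike.IsHomogeneousElem 𝒜 (f n)) → ¬ StrictMono fun n => rAnn (f n))
    {K : AddSubgroup R} (hK : IsGradedRightIdeal 𝒜 K) (hne : K ≠ ⊥) :
    ∃ a, a ∈ K ∧ SetLike.IsHomogeneousElem 𝒜 a ∧ (∀ k : ℕ, a ^ (k+1) ≠ 0) ∧ rAnn a = rAnn (a * a) := by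
  obtain ⟨x, hxK, hxhom, hxpow⟩ := exists_nonnilpotent 𝒜 hprime hacc hK hne
  have hstab0 : ∃ n : ℕ, rAnn (x ^ (n+1)) = rAnn (x ^ (n+2)) := by
    by_contra hc
    push_neg at hc
    apply hacc (fun n => x ^ (n+1)) (fun n => homog_pow 𝒜 hxhom (n+1))
    apply strictMono_nat_of_lt_succ
    intro n
    exact lt_of_le_of_ne (rAnn_pow_le (n+1) 1) (hc n)
  obtain ⟨n, hn⟩ := hstab0
  have hstab : ∀ j, rAnn (x ^ (n+1+j)) = rAnn (x ^ (n+1)) := by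
    intro j
    induction j with
    | zero => rfl
    | succ j ih =>
      refine le_antisymm ?_ (ih ▸ rAnn_pow_le (n+1+j) 1)
      intro y hy
      have h1 : x ^ (n+2) * (x ^ j * y) = 0 := by
        rw [← mul_assoc, ← pow_add]
        have : n + 2 + j = n + 1 + (j+1) := by omega
        rw [this]
        exact hy
      have h2 : x ^ j * y ∈ rAnn (x ^ (n+1)) := hn ▸ h1
      have h3 : x ^ (n+1+j) * y = 0 := by
        rw [pow_add, mul_assoc]
        exact h2
      exact ih ▸ (show y ∈ rAnn (x ^ (n+1+j)) from h3)
  refine ⟨x ^ (n+1), ?_, homog_pow 𝒜 hxhom (n+1), ?_, ?_⟩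
  · have : x ^ (n+1) = x * x ^ n := by rw [← pow_succ']
    rw [this]
    exact hK.1 x hxK (x ^ n)
  · intro k
    rw [← pow_mul]
    obtain ⟨m, hm⟩ : ∃ m, (n+1) * (k+1) = m + 1 := ⟨n*k+n+k, by ring⟩
    rw [hm]
    exact hxpow m
  · rw [← pow_add]
    exact (hstab (n+1)).symm
end Graded

section Graded2
variable {G R : Type*} [AddCommGroup G] [DecidableEq G] [Ring R]
variable (𝒜 : G → AddSubgroup R) [GradedRing 𝒜]

lemma indep_above' {ι : Type*} [LinearOrder ι] (A : ι → AddSubgroup R)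
    (h : ∀ j, ∀ x ∈ A j, x ∈ (⨆ i, ⨆ _ : j < i, A i) → x = 0) : iSupIndep A :=
  indep_above A h

lemma indep_below' {ι : Type*} [LinearOrder ι] (A : ι → AddSubgroup R)
    (h : ∀ j, ∀ x ∈ A j, x ∈ (⨆ i, ⨆ _ : i < j, A i) → x = 0) : iSupIndep A :=
  indep_below A h

lemma grUniform_sub {M M' : AddSubgroup R} (hM : GrUniform 𝒜 M) (hle : M' ≤ M)
    (hne : M' ≠ ⊥) : GrUniform 𝒜 M' :=
  ⟨hne, fun K L gK gL hK hL nK nL => hM.2 K L gK gL (hK.trans hle) (hL.trans hle) nK nL⟩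

lemma exists_uniform
    (hsum : ¬ ∃ I : ℕ → AddSubgroup R, (∀ n, IsGradedRightIdeal 𝒜 (I n)) ∧
      (∀ n, I n ≠ ⊥) ∧ iSupIndep I)
    {K : AddSubgroup R} (hK : IsGradedRightIdeal 𝒜 K) (hne : K ≠ ⊥) :
    ∃ U, IsGradedRightIdeal 𝒜 U ∧ U ≠ ⊥ ∧ U ≤ K ∧ GrUniform 𝒜 U := by
  classical
  by_contra hc
  push_neg at hc
  have step : ∀ M : AddSubgroup R, IsGradedRightIdeal 𝒜 M → M ≠ ⊥ → M ≤ K →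
      ∃ A B : AddSubgroup R, (IsGradedRightIdeal 𝒜 A ∧ A ≠ ⊥ ∧ A ≤ M) ∧
        (IsGradedRightIdeal 𝒜 B ∧ B ≠ ⊥ ∧ B ≤ M) ∧ A ⊓ B = ⊥ := by
    intro M hM hMne hMK
    have hnu : ¬ GrUniform 𝒜 M := hc M hM hMne hMK
    have hQ : ¬ ∀ K' L' : AddSubgroup R, IsGradedRightIdeal 𝒜 K' → IsGradedRightIdeal 𝒜 L' →
        K' ≤ M → L' ≤ M → K' ≠ ⊥ → L' ≠ ⊥ → K' ⊓ L' ≠ ⊥ := fun q => hnu ⟨hMne, q⟩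
    push_neg at hQ
    obtain ⟨A, B, h1, h2, h3, h4, h5, h6, h7⟩ := hQ
    exact ⟨A, B, ⟨h1, h5, h3⟩, ⟨h2, h6, h4⟩, h7⟩
  let T := {M : AddSubgroup R // IsGradedRightIdeal 𝒜 M ∧ M ≠ ⊥ ∧ M ≤ K}
  have stepT : ∀ M : T, ∃ p : AddSubgroup R × T,
      (IsGradedRightIdeal 𝒜 p.1 ∧ p.1 ≠ ⊥ ∧ p.1 ≤ M.1) ∧ p.2.1 ≤ M.1 ∧ p.1 ⊓ p.2.1 = ⊥ := by
    intro M
    obtain ⟨A, B, hA, hB, hAB⟩ := step M.1 M.2.1 M.2.2.1 M.2.2.2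
    exact ⟨⟨A, ⟨B, hB.1, hB.2.1, hB.2.2.trans M.2.2.2⟩⟩, hA, hB.2.2, hAB⟩
  choose F hF using stepT
  let seq : ℕ → T := fun n => (fun M => (F M).2)^[n] ⟨K, hK, hne, le_refl K⟩
  have hseqsucc : ∀ n, seq (n+1) = (F (seq n)).2 := by
    intro n
    show (fun M => (F M).2)^[n+1] _ = _
    rw [Function.iterate_succ_apply']
  set A : ℕ → AddSubgroup R := fun n => (F (seq n)).1 with hAdef
  have hA1 : ∀ n, IsGradedRightIdeal 𝒜 (A n) := fun n => (hF (seq n)).1.1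
  have hA2 : ∀ n, A n ≠ ⊥ := fun n => (hF (seq n)).1.2.1
  have hA3 : ∀ n, A n ≤ (seq n).1 := fun n => (hF (seq n)).1.2.2
  have hA4 : ∀ n, A n ⊓ (seq (n+1)).1 = ⊥ := by
    intro n
    rw [hseqsucc n]
    exact (hF (seq n)).2.2
  have hsteple : ∀ n, (seq (n+1)).1 ≤ (seq n).1 := by
    intro n
    rw [hseqsucc n]
    exact (hF (seq n)).2.1
  have hmono : ∀ n m, n ≤ m → (seq m).1 ≤ (seq n).1 := by
    intro n m hnm
    induction hnm with
    | refl => exact le_refl _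
    | step h ih => exact (hsteple _).trans ih
  apply hsum
  refine ⟨A, hA1, hA2, indep_above' A ?_⟩
  intro j x hxA hxS
  have hle : (⨆ i, ⨆ _ : j < i, A i) ≤ (seq (j+1)).1 := by
    apply iSup₂_le
    intro i hi
    exact (hA3 i).trans (hmono (j+1) i hi)
  have : x ∈ A j ⊓ (seq (j+1)).1 := ⟨hxA, hle hxS⟩
  rw [hA4 j] at this
  exact AddSubgroup.mem_bot.1 this

end Graded2

section Main
variable {G R : Type*} [AddCommGroup G] [DecidableEq G] [Ring R]
variable (𝒜 : G → AddSubgroup R) [GradedRing 𝒜]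

lemma biSup_lt_succ' (f : ℕ → AddSubgroup R) (n : ℕ) :
    (⨆ i, ⨆ _ : i < n + 1, f i) = (⨆ i, ⨆ _ : i < n, f i) ⊔ f n := by
  apply le_antisymm
  · apply iSup₂_le
    intro i hi
    rcases Nat.lt_succ_iff_lt_or_eq.1 hi with h | rfl
    · exact le_trans (le_iSup₂ (f := fun i (_ : i < n) => f i) i h) le_sup_left
    · exact le_sup_right
  · apply sup_le
    · apply iSup₂_le
      intro i hi
      exact le_iSup₂ (f := fun i (_ : i < n + 1) => f i) i (hi.trans n.lt_succ_self)
    · exact le_iSup₂ (f := fun i (_ : i < n + 1) => f i) n n.lt_succ_self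

lemma vanish (b : ℕ → R) : ∀ n : ℕ,
    (∀ i, i < n → rAnn (b i) = rAnn (b i * b i)) →
    (∀ i j, i < j → j < n → b i * b j = 0) →
    ∀ x, x ∈ (⨆ i, ⨆ _ : i < n, mulLeftRange (b i)) → (∀ i, i < n → b i * x = 0) → x = 0 := by
  intro n
  induction n with
  | zero =>
    intro _ _ x hx _
    have : (⨆ i, ⨆ _ : i < 0, mulLeftRange (b i)) = (⊥ : AddSubgroup R) := by
      simp
    rw [this] at hx
    exact AddSubgroup.mem_bot.1 hx
  | succ n ih =>
    intro hsq hprod x hx hann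
    rw [biSup_lt_succ'] at hx
    obtain ⟨y, hy, z, hz, hyzx⟩ := AddSubgroup.mem_sup.1 hx
    obtain ⟨r, hr⟩ := hz
    have hy0 : y = 0 := by
      apply ih (fun i hi => hsq i (hi.trans n.lt_succ_self))
        (fun i j hij hj => hprod i j hij (hj.trans n.lt_succ_self)) y hy
      intro i hi
      have h1 : b i * x = 0 := hann i (hi.trans n.lt_succ_self)
      have h2 : b i * z = 0 := by
        rw [← hr, ← mul_assoc, hprod i n hi n.lt_succ_self, zero_mul]
      have : b i * y = b i * x - b i * z := by
        rw [← hyzx, mul_add]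
        abel
      rw [this, h1, h2, sub_zero]
    have hxz : x = z := by rw [← hyzx, hy0, zero_add]
    have hbnx : b n * x = 0 := hann n n.lt_succ_self
    rw [hxz, ← hr, ← mul_assoc] at hbnx
    have : r ∈ rAnn (b n) := (hsq n n.lt_succ_self).symm ▸ (show r ∈ rAnn (b n * b n) from hbnx)
    rw [hxz, ← hr]
    exact this

def GoodSeq (I : AddSubgroup R) (n : ℕ) (b : ℕ → R) : Prop :=
  (∀ i, i < n → b i ∈ I) ∧
  (∀ i, i < n → SetLike.IsHomogeneousElem 𝒜 (b i)) ∧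
  (∀ i, i < n → ∀ k : ℕ, (b i) ^ (k+1) ≠ 0) ∧
  (∀ i, i < n → GrUniform 𝒜 (mulLeftRange (b i))) ∧
  (∀ i, i < n → rAnn (b i) = rAnn (b i * b i)) ∧
  (∀ i j, i < j → j < n → b i * b j = 0)

lemma goodSeq_zero (I : AddSubgroup R) (b : ℕ → R) : GoodSeq 𝒜 I 0 b := by
  refine ⟨?_, ?_, ?_, ?_, ?_, ?_⟩ <;> intro i <;> omega

lemma goodSeq_congr {I : AddSubgroup R} {n : ℕ} {b b' : ℕ → R} (h : GoodSeq 𝒜 I n b)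
    (he : ∀ i, i < n → b' i = b i) : GoodSeq 𝒜 I n b' := by
  obtain ⟨h1, h2, h3, h4, h5, h6⟩ := h
  refine ⟨fun i hi => (he i hi) ▸ h1 i hi, fun i hi => (he i hi) ▸ h2 i hi,
    fun i hi => (he i hi) ▸ h3 i hi, fun i hi => (he i hi) ▸ h4 i hi,
    fun i hi => (he i hi) ▸ h5 i hi, fun i j hij hj => ?_⟩
  rw [he i (hij.trans hj), he j hj]
  exact h6 i j hij hj

lemma inf_graded {A B : AddSubgroup R} (hA : IsGradedRightIdeal 𝒜 A)
    (hB : IsGradedRightIdeal 𝒜 B) : IsGradedRightIdeal 𝒜 (A ⊓ B) :=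
  ⟨fun a ha r => ⟨hA.1 a ha.1 r, hB.1 a ha.2 r⟩,
   fun a ha g => ⟨hA.2 a ha.1 g, hB.2 a ha.2 g⟩⟩

lemma iInfAnn_graded (b : ℕ → R) (n : ℕ) (hhom : ∀ i, i < n → SetLike.IsHomogeneousElem 𝒜 (b i)) :
    IsGradedRightIdeal 𝒜 (⨅ i, ⨅ _ : i < n, rAnn (b i)) := by
  constructor
  · intro a ha r
    simp only [AddSubgroup.mem_iInf] at ha ⊢
    intro i hi
    exact (rAnn_graded 𝒜 (hhom i hi)).1 a (ha i hi) r
  · intro a ha g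
    simp only [AddSubgroup.mem_iInf] at ha ⊢
    intro i hi
    exact (rAnn_graded 𝒜 (hhom i hi)).2 a (ha i hi) g

lemma extend_good (hprime : GrPrime 𝒜) (hgoldie : GrGoldie 𝒜)
    {I : AddSubgroup R} (hI : IsGradedRightIdeal 𝒜 I)
    (hess : ∀ K : AddSubgroup R, (∀ a ∈ K, ∀ r : R, a * r ∈ K) → K ≠ ⊥ → I ⊓ K ≠ ⊥)
    {n : ℕ} {b : ℕ → R} (hb : GoodSeq 𝒜 I n b)
    (hinf : (⨅ i, ⨅ _ : i < n, rAnn (b i)) ≠ ⊥) :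
    ∃ b', GoodSeq 𝒜 I (n+1) b' ∧ ∀ i, i < n → b' i = b i := by
  classical
  set N := (⨅ i, ⨅ _ : i < n, rAnn (b i)) with hNdef
  have hNclosed : ∀ a ∈ N, ∀ r : R, a * r ∈ N := by
    intro a ha r
    simp only [hNdef, AddSubgroup.mem_iInf] at ha ⊢
    intro i hi
    show b i * (a * r) = 0
    rw [← mul_assoc, show b i * a = 0 from ha i hi, zero_mul]
  have hNgr : IsGradedRightIdeal 𝒜 N := iInfAnn_graded 𝒜 b n hb.2.1
  have hIN : I ⊓ N ≠ ⊥ := hess N hNclosed hinf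
  have hINgr : IsGradedRightIdeal 𝒜 (I ⊓ N) := inf_graded 𝒜 hI hNgr
  obtain ⟨U, hUgr, hUne, hUle, hUuni⟩ := exists_uniform 𝒜 hgoldie.2 hINgr hIN
  obtain ⟨a, haU, hahom, hapow, hasq⟩ := exists_uniform_elt_aux 𝒜 hprime hgoldie.1 hUgr hUne
  have ha0 : a ≠ 0 := by
    have := hapow 0
    rwa [pow_one] at this
  have haI : a ∈ I := (hUle haU).1
  have haN : a ∈ N := (hUle haU).2
  have haR : mulLeftRange a ≤ U := by
    rintro x ⟨r, rfl⟩
    exact hUgr.1 a haU r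
  have haRuni : GrUniform 𝒜 (mulLeftRange a) :=
    grUniform_sub 𝒜 hUuni haR (ne_bot_of_mem ⟨1, mul_one a⟩ ha0)
  refine ⟨fun i => if i < n then b i else a, ?_, fun i hi => if_pos hi⟩
  obtain ⟨h1, h2, h3, h4, h5, h6⟩ := hb
  have hcase : ∀ i, i < n + 1 → (if i < n then b i else a) = b i ∨
      ((if i < n then b i else a) = a ∧ i = n) := by
    intro i hi
    by_cases h : i < n
    · exact Or.inl (if_pos h)
    · exact Or.inr ⟨if_neg h, by omega⟩
  refine ⟨?_, ?_, ?_, ?_, ?_, ?_⟩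
  · intro i hi
    by_cases h : i < n
    · simp only [if_pos h]; exact h1 i h
    · simp only [if_neg h]; exact haI
  · intro i hi
    by_cases h : i < n
    · simp only [if_pos h]; exact h2 i h
    · simp only [if_neg h]; exact hahom
  · intro i hi
    by_cases h : i < n
    · simp only [if_pos h]; exact h3 i h
    · simp only [if_neg h]; exact hapow
  · intro i hi
    by_cases h : i < n
    · simp only [if_pos h]; exact h4 i h
    · simp only [if_neg h]; exact haRuni
  · intro i hi
    by_cases h : i < n
    · simp only [if_pos h]; exact h5 i h
    · simp only [if_neg h]; exact hasq
  · intro i j hij hj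
    have hi : i < n := by
      by_cases h : j < n
      · omega
      · have : j = n := by omega
        omega
    simp only [if_pos hi]
    by_cases h : j < n
    · simp only [if_pos h]; exact h6 i j hij h
    · have hjn : j = n := by omega
      simp only [if_neg h]
      have := haN
      simp only [hNdef, AddSubgroup.mem_iInf] at this
      exact this i hi

end Main

section Main2
variable {G R : Type*} [AddCommGroup G] [DecidableEq G] [Ring R]
variable (𝒜 : G → AddSubgroup R) [GradedRing 𝒜]

lemma main_exists (hprime : GrPrime 𝒜) (hgoldie : GrGoldie 𝒜)
    {I : AddSubgroup R} (hI : IsGradedRightIdeal 𝒜 I)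
    (hess : ∀ K : AddSubgroup R, (∀ a ∈ K, ∀ r : R, a * r ∈ K) → K ≠ ⊥ → I ⊓ K ≠ ⊥) :
    ∃ (n : ℕ) (b : ℕ → R), GoodSeq 𝒜 I n b ∧ (⨅ i, ⨅ _ : i < n, rAnn (b i)) = ⊥ := by
  classical
  by_contra hc
  push_neg at hc
  have step : ∀ n (s : {b : ℕ → R // GoodSeq 𝒜 I n b}),
      ∃ s' : {b' : ℕ → R // GoodSeq 𝒜 I (n+1) b'}, ∀ i, i < n → s'.1 i = s.1 i := by
    intro n s
    obtain ⟨b', hb', he⟩ := extend_good 𝒜 hprime hgoldie hI hess s.2 (hc n s.1 s.2)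
    exact ⟨⟨b', hb'⟩, he⟩
  choose F hF using step
  let S : ∀ n : ℕ, {b : ℕ → R // GoodSeq 𝒜 I n b} :=
    fun n => Nat.rec ⟨fun _ => 0, goodSeq_zero 𝒜 I _⟩ (fun n s => F n s) n
  have hSsucc : ∀ n, S (n+1) = F n (S n) := fun n => rfl
  have agree : ∀ n i, i < n → (S (n+1)).1 i = (S n).1 i := by
    intro n i hi
    rw [hSsucc n]
    exact hF n (S n) i hi
  set b : ℕ → R := fun i => (S (i+1)).1 i with hbdef
  have hb : ∀ n i, i < n → (S n).1 i = b i := by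
    intro n
    induction n with
    | zero => omega
    | succ n ih =>
      intro i hi
      by_cases h : i < n
      · rw [agree n i h]
        exact ih i h
      · have : i = n := by omega
        subst this
        rfl
  have hGood : ∀ n, GoodSeq 𝒜 I n b := by
    intro n
    exact goodSeq_congr 𝒜 (S n).2 (fun i hi => (hb n i hi).symm)
  apply hgoldie.2
  refine ⟨fun i => mulLeftRange (b i), ?_, ?_, ?_⟩
  · intro i
    exact mulLeftRange_graded 𝒜 ((hGood (i+1)).2.1 i i.lt_succ_self)
  · intro i
    have h0 : b i ≠ 0 := by
      have := (hGood (i+1)).2.2.1 i i.lt_succ_self 0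
      rwa [pow_one] at this
    exact ne_bot_of_mem ⟨1, mul_one (b i)⟩ h0
  · apply indep_below'
    intro j x hxj hxS
    obtain ⟨r, hr⟩ := hxj
    apply vanish b j ((hGood j).2.2.2.2.1) ((hGood j).2.2.2.2.2) x hxS
    intro i hi
    rw [← hr, ← mul_assoc, (hGood (j+1)).2.2.2.2.2 i j hi j.lt_succ_self, zero_mul]

end Main2

/-- In a gr-prime, right gr-Goldie ring, every essential graded right ideal `I` contains
finitely many non-nilpotent homogeneous elements `a 0, …, a (n-1)` with each `a i • R`
gr-uniform, whose right-ideal sum is direct and whose right annihilators intersect in zero. -/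
theorem essential_graded_right_ideal_uniform_elements
    {G R : Type*} [AddCommGroup G] [DecidableEq G] [Ring R]
    (𝒜 : G → AddSubgroup R) [GradedRing 𝒜]
    (hprime : GrPrime 𝒜) (hgoldie : GrGoldie 𝒜)
    (I : AddSubgroup R) (hI : IsGradedRightIdeal 𝒜 I)
    (hess : ∀ K : AddSubgroup R, (∀ a ∈ K, ∀ r : R, a * r ∈ K) → K ≠ ⊥ → I ⊓ K ≠ ⊥) :
    ∃ (n : ℕ) (a : Fin n → R),
      (∀ i, a i ∈ I) ∧
      (∀ i, SetLike.IsHomogeneousElem 𝒜 (a i)) ∧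
      (∀ i, ∀ m : ℕ, 1 ≤ m → (a i) ^ m ≠ 0) ∧
      (∀ i, GrUniform 𝒜 (mulLeftRange (a i))) ∧
      iSupIndep (fun i => mulLeftRange (a i)) ∧
      (⨅ i, rAnn (a i)) = ⊥ := by

  classical
  obtain ⟨n, b, hGood, hbot⟩ := main_exists 𝒜 hprime hgoldie hI hess
  obtain ⟨h1, h2, h3, h4, h5, h6⟩ := hGood
  refine ⟨n, fun i => b i, fun i => h1 i i.isLt, fun i => h2 i i.isLt, ?_, fun i => h4 i i.isLt,
    ?_, ?_⟩
  · intro i m hm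
    obtain ⟨k, rfl⟩ : ∃ k, m = k + 1 := ⟨m - 1, by omega⟩
    exact h3 i i.isLt k
  · apply indep_below'
    intro j x hxj hxS
    obtain ⟨r, hr⟩ := hxj
    have hle : (⨆ i : Fin n, ⨆ _ : i < j, mulLeftRange (b i)) ≤
        ⨆ i : ℕ, ⨆ _ : i < (j : ℕ), mulLeftRange (b i) := by
      apply iSup₂_le
      intro i hi
      exact le_iSup₂ (f := fun i (_ : i < (j:ℕ)) => mulLeftRange (b i)) (i : ℕ) (show (i:ℕ) < (j:ℕ) from hi)
    apply vanish b (j : ℕ) (fun i hi => h5 i (lt_trans hi j.isLt)) (fun i k hik hk => h6 i k hik (lt_trans hk j.isLt)) x (hle hxS)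
    intro i hi
    rw [← hr, ← mul_assoc, h6 i j hi j.isLt, zero_mul]
  · rw [eq_bot_iff]
    rw [← hbot]
    apply le_iInf
    intro i
    apply le_iInf
    intro hi
    exact iInf_le (fun i : Fin n => rAnn (b i)) ⟨i, hi⟩
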